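/- For ρ > 0, m ∈ ℕ, define Ξ_ρ^m(s) = ∑_{l=0}^m Ξ_ρ(s+l) where Ξ_ρ(s) = ∫₀^∞ t^(s/2-1) Ψ(t) e^{-ρ log²(t)} dt. Then Ξ_ρ^m(s) - Ξ_ρ^m(1-m-s) = (1/2)·√(π/ρ)·( exp((s-1)²/(16ρ)) - exp((s+m)²/(16ρ)) ) for all s ∈ ℂ. -/

import Mathlib

open MeasureTheory Real Filter

noncomputable def Psi (t : ℝ) : ℝ := ∑' n : ℕ, Real.exp (-Real.pi * ((n : ℝ) + 1) ^ 2 * t)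

noncomputable def Xi (ρ : ℝ) (s : ℂ) : ℂ :=
  ∫ t in Set.Ioi (0:ℝ), (t : ℂ) ^ (s / 2 - 1) * (Psi t : ℂ) * (Real.exp (-ρ * Real.log t ^ 2) : ℂ)

/-!
Substituting `t = eˣ` turns `Ξ_ρ(s)` into `∫_ℝ e^{sx/2} Ψ(eˣ) e^{-ρx²} dx`. Since `2Ψ + 1` is the
theta function, `Ψ(1/t) = √t Ψ(t) + (√t - 1)/2`; after `x ↦ -x` this shows that `Ξ_ρ(1 - s) - Ξ_ρ(s)`
is half the difference of the Gaussian integrals `∫ e^{cx - ρx²} dx = √(π/ρ) e^{c²/(4ρ)}` at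
`c = s/2` and `c = (s-1)/2`. The right-hand side of this functional equation has the form
`F(s) - F(s+1)`, so summing it over the shifts `s + l`, `l ≤ m`, telescopes.
-/

open Complex Set HurwitzZeta

theorem Finset.sum_range_sub_sum_range_one_sub {R M : Type*} [CommRing R] [AddCommGroup M]
    {f F : R → M} (h : ∀ s, f s - f (1 - s) = F s - F (s + 1)) (m : ℕ) (s : R) :
    ∑ l ∈ Finset.range (m + 1), f (s + l) - ∑ l ∈ Finset.range (m + 1), f (1 - m - s + l)
      = F s - F (s + (m + 1)) := by
  have hreflect : ∑ l ∈ Finset.range (m + 1), f (1 - m - s + l)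
      = ∑ l ∈ Finset.range (m + 1), f (1 - (s + l)) := by
    rw [← Finset.sum_range_reflect]
    refine Finset.sum_congr rfl fun l hl ↦ ?_
    rw [add_tsub_cancel_right, Nat.cast_sub (Finset.mem_range_succ_iff.mp hl)]
    ring_nf
  rw [hreflect, ← Finset.sum_sub_distrib]
  simp_rw [h, add_assoc]
  simpa using Finset.sum_range_sub' (fun l : ℕ ↦ F (s + l)) (m + 1)

lemma hasSum_one_div_nat_add_one_sq :
    HasSum (fun n : ℕ ↦ 1 / ((n : ℝ) + 1) ^ 2) (π ^ 2 / 6) := by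
  simpa using (hasSum_nat_add_iff' 1).mpr hasSum_zeta_two

lemma exp_neg_le_one_div {y : ℝ} (hy : 0 < y) : rexp (-y) ≤ 1 / y := by
  rw [Real.exp_neg, one_div]
  exact inv_anti₀ hy ((le_add_of_nonneg_right zero_le_one).trans (add_one_le_exp y))

lemma integral_comp_exp {E : Type*} [NormedAddCommGroup E] [NormedSpace ℝ E] (g : ℝ → E) :
    ∫ t in Ioi 0, g t = ∫ x : ℝ, rexp x • g (rexp x) := by
  simpa [abs_of_pos (Real.exp_pos _)] using integral_image_eq_integral_abs_deriv_smul
    MeasurableSet.univ (fun x _ ↦ (Real.hasDerivAt_exp x).hasDerivWithinAt)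
    Real.exp_injective.injOn g

lemma ofReal_exp_cpow (x : ℝ) (w : ℂ) : ((rexp x : ℝ) : ℂ) ^ w = cexp (w * x) := by
  rw [ofReal_exp, cpow_def_of_ne_zero (Complex.exp_ne_zero _),
    log_exp (by simpa using pi_pos) (by simp [pi_nonneg]), mul_comm]

section Gaussian

variable {ρ : ℝ}

lemma cexp_mul_mul_exp_neg_mul_sq (c : ℂ) (x : ℝ) :
    cexp (c * x) * rexp (-ρ * x ^ 2) = cexp (-ρ * x ^ 2 + c * x + 0) := by
  rw [ofReal_exp, ← Complex.exp_add]
  push_cast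
  ring_nf

lemma integrable_cexp_mul_exp_neg_mul_sq (hρ : 0 < ρ) (c : ℂ) :
    Integrable fun x : ℝ ↦ cexp (c * x) * rexp (-ρ * x ^ 2) := by
  simp_rw [cexp_mul_mul_exp_neg_mul_sq]
  exact integrable_cexp_quadratic (by simpa using hρ) c 0

lemma integral_cexp_mul_exp_neg_mul_sq (hρ : 0 < ρ) (c : ℂ) :
    ∫ x : ℝ, cexp (c * x) * rexp (-ρ * x ^ 2) = √(π / ρ) * cexp (c ^ 2 / (4 * ρ)) := by
  have hρ' : (ρ : ℂ) ≠ 0 := ofReal_ne_zero.mpr hρ.ne'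
  simp_rw [cexp_mul_mul_exp_neg_mul_sq]
  rw [integral_cexp_quadratic (by simpa using hρ), neg_neg, sqrt_eq_rpow,
    ofReal_cpow (div_pos pi_pos hρ).le]
  push_cast
  congr 2
  field_simp
  ring

end Gaussian

lemma Psi_nonneg (t : ℝ) : 0 ≤ Psi t := tsum_nonneg fun _ ↦ (Real.exp_pos _).le

lemma mul_Psi_le {t : ℝ} (ht : 0 < t) : t * Psi t ≤ π / 6 := by
  have hle (n : ℕ) :
      rexp (-π * ((n : ℝ) + 1) ^ 2 * t) ≤ 1 / (π * t) * (1 / ((n : ℝ) + 1) ^ 2) := by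
    convert exp_neg_le_one_div (y := π * ((n : ℝ) + 1) ^ 2 * t) (by positivity) using 1
    · ring_nf
    · field_simp
  have hmaj := hasSum_one_div_nat_add_one_sq.mul_left (1 / (π * t))
  have hsum := hmaj.summable.of_nonneg_of_le (fun _ ↦ (Real.exp_pos _).le) hle
  calc t * Psi t ≤ t * (1 / (π * t) * (π ^ 2 / 6)) := by
        gcongr; exact hasSum_le hle hsum.hasSum hmaj
    _ = π / 6 := by field_simp

lemma evenKernel_zero_eq_one_add_two_mul_Psi {t : ℝ} (ht : 0 < t) :
    evenKernel 0 t = 1 + 2 * Psi t := by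
  have hτ : 0 < (I * t).im := by simpa using ht
  have h := evenKernel_def 0 t
  simp only [QuotientAddGroup.mk_zero, ofReal_zero, zero_pow two_ne_zero, mul_zero, zero_mul,
    Complex.exp_zero, one_mul, ← jacobiTheta_eq_jacobiTheta₂] at h
  apply ofReal_injective
  rw [h, jacobiTheta_eq_tsum_nat hτ, Psi, ofReal_add, ofReal_mul, ofReal_tsum]
  congr 3 with n
  rw [ofReal_exp]
  congr 1
  push_cast
  linear_combination (π * (n + 1) ^ 2 * t : ℂ) * I_mul_I

lemma continuousOn_Psi : ContinuousOn Psi (Ioi 0) := by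
  have h : EqOn (fun t ↦ (evenKernel 0 t - 1) / 2) Psi (Ioi 0) := fun t ht ↦ by
    simp only [evenKernel_zero_eq_one_add_two_mul_Psi ht]; ring
  exact (((continuousOn_evenKernel 0).sub continuousOn_const).div_const 2).congr h.symm

lemma Psi_one_div {t : ℝ} (ht : 0 < t) : Psi (1 / t) = √t * Psi t + (√t - 1) / 2 := by
  have h := evenKernel_functional_equation 0 (1 / t)
  rw [← evenKernel_eq_cosKernel_of_zero, one_div_one_div, one_div t, inv_rpow ht.le, one_div,
    inv_inv, ← sqrt_eq_rpow, evenKernel_zero_eq_one_add_two_mul_Psi ht,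
    evenKernel_zero_eq_one_add_two_mul_Psi (inv_pos.mpr ht)] at h
  rw [one_div]
  linarith

lemma Psi_exp_neg (x : ℝ) :
    Psi (rexp (-x)) = rexp (x / 2) * Psi (rexp x) + (rexp (x / 2) - 1) / 2 := by
  rw [Real.exp_neg, ← one_div, Psi_one_div (Real.exp_pos x), exp_half]

lemma Xi_eq_integral (ρ : ℝ) (s : ℂ) :
    Xi ρ s = ∫ x : ℝ, cexp (s / 2 * x) * Psi (rexp x) * rexp (-ρ * x ^ 2) := by
  rw [Xi, integral_comp_exp]
  congr 1 with x
  rw [ofReal_exp_cpow, Real.log_exp, real_smul, ofReal_exp, ← mul_assoc, ← mul_assoc,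
    ← Complex.exp_add]
  ring_nf

lemma integrable_Xi_integrand {ρ : ℝ} (hρ : 0 < ρ) (c : ℂ) :
    Integrable fun x : ℝ ↦ cexp (c * x) * Psi (rexp x) * rexp (-ρ * x ^ 2) := by
  have hbdd : ∀ x : ℝ, ‖((rexp x * Psi (rexp x) : ℝ) : ℂ)‖ ≤ π / 6 := fun x ↦ by
    rw [norm_real, norm_of_nonneg (mul_nonneg (Real.exp_pos x).le (Psi_nonneg _))]
    exact mul_Psi_le (Real.exp_pos x)
  have hmeas : Continuous fun x : ℝ ↦ ((rexp x * Psi (rexp x) : ℝ) : ℂ) :=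
    continuous_ofReal.comp (Real.continuous_exp.mul
      (continuousOn_Psi.comp_continuous Real.continuous_exp Real.exp_pos))
  refine ((integrable_cexp_mul_exp_neg_mul_sq hρ (c - 1)).mul_bdd hmeas.aestronglyMeasurable
    (.of_forall hbdd)).congr (.of_forall fun x ↦ ?_)
  simp only [ofReal_mul, ofReal_exp, sub_mul, Complex.exp_sub, one_mul]
  field_simp

lemma Xi_one_sub {ρ : ℝ} (hρ : 0 < ρ) (s : ℂ) :
    Xi ρ (1 - s) = Xi ρ s + 1 / 2 * ((∫ x : ℝ, cexp (s / 2 * x) * rexp (-ρ * x ^ 2))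
      - ∫ x : ℝ, cexp ((s - 1) / 2 * x) * rexp (-ρ * x ^ 2)) := by
  have hpt (x : ℝ) :
      cexp ((1 - s) / 2 * (-x : ℝ)) * Psi (rexp (-x)) * rexp (-ρ * (-x) ^ 2)
        = cexp (s / 2 * x) * Psi (rexp x) * rexp (-ρ * x ^ 2)
          + 1 / 2 * (cexp (s / 2 * x) * rexp (-ρ * x ^ 2)
            - cexp ((s - 1) / 2 * x) * rexp (-ρ * x ^ 2)) := by
    have e1 : cexp ((s - 1) / 2 * x) * cexp (x / 2) = cexp (s / 2 * x) := by
      rw [← Complex.exp_add]; ring_nf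
    rw [Psi_exp_neg, neg_sq, show (1 - s) / 2 * ((-x : ℝ) : ℂ) = (s - 1) / 2 * x by push_cast; ring]
    push_cast
    linear_combination ((Psi (rexp x) : ℂ) + 1 / 2) * cexp (-ρ * x ^ 2) * e1
  have hG (c : ℂ) := integrable_cexp_mul_exp_neg_mul_sq hρ c
  have hGsub : Integrable fun x : ℝ ↦ 1 / 2 * (cexp (s / 2 * x) * rexp (-ρ * x ^ 2)
      - cexp ((s - 1) / 2 * x) * rexp (-ρ * x ^ 2)) := ((hG _).sub (hG _)).const_mul _
  rw [Xi_eq_integral, ← integral_neg_eq_self, funext hpt,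
    integral_add (integrable_Xi_integrand hρ _) hGsub, integral_const_mul,
    integral_sub (hG _) (hG _), Xi_eq_integral]

lemma Xi_sub_Xi_one_sub {ρ : ℝ} (hρ : 0 < ρ) (s : ℂ) :
    Xi ρ s - Xi ρ (1 - s)
      = 1 / 2 * √(π / ρ) * (cexp ((s - 1) ^ 2 / (16 * ρ)) - cexp (s ^ 2 / (16 * ρ))) := by
  rw [Xi_one_sub hρ, integral_cexp_mul_exp_neg_mul_sq hρ, integral_cexp_mul_exp_neg_mul_sq hρ]
  ring_nf

theorem stmt5 (ρ : ℝ) (hρ : 0 < ρ) (m : ℕ) (s : ℂ) :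
    (∑ l ∈ Finset.range (m + 1), Xi ρ (s + (l : ℂ)))
      - (∑ l ∈ Finset.range (m + 1), Xi ρ (1 - (m : ℂ) - s + (l : ℂ)))
      = (1/2) * (Real.sqrt (Real.pi / ρ) : ℂ) *
        (Complex.exp ((s - 1) ^ 2 / (16 * (ρ : ℂ)))
          - Complex.exp ((s + (m : ℂ)) ^ 2 / (16 * (ρ : ℂ)))) := by
  rw [Finset.sum_range_sub_sum_range_one_sub
    (F := fun s ↦ 1 / 2 * √(π / ρ) * cexp ((s - 1) ^ 2 / (16 * ρ)))
    (fun s ↦ by rw [Xi_sub_Xi_one_sub hρ, add_sub_cancel_right]; ring)]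
  ring_nf
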